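/- arXiv:1503.04562 — 3 statements merged into one kernel-verified Lean document; each statement's English description precedes it below -/
import Mathlib

section
/- Let n be an integer with 10 ≤ n ≤ 15 and let G = 2^+.S_n (the presented group with α = 0). Then G has no maximal Klein-four subgroups; that is, every subgroup of G isomorphic to C2 × C2 is properly contained in a strictly larger elementary abelian 2-subgroup of G. -/
/-! Double covers `2^α.S_n` of the symmetric groups, via the presentation with
generators `z, t_1, …, t_{n-1}` and relations `z² = 1`, `t_j² = z^α`,
`(t_j t_{j+1})³ = z^α`, `[z, t_j] = 1`, and `t_j t_k = z t_k t_j` for `|j - k| > 1`.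
Here `α = 0` gives `2^+.S_n` and `α = 1` gives `2^-.S_n`. -/

namespace DoubleCover

/-- Generators: `Sum.inl ()` is `z`; `Sum.inr j` is `t_{j+1}` for `j : Fin (n - 1)`. -/
abbrev Gen (n : ℕ) := Unit ⊕ Fin (n - 1)

/-- The word `z` in the free group on the generators. -/
def zw (n : ℕ) : FreeGroup (Gen n) := FreeGroup.of (Sum.inl ())

/-- The word `t_{j+1}` in the free group on the generators. -/
def tw (n : ℕ) (j : Fin (n - 1)) : FreeGroup (Gen n) := FreeGroup.of (Sum.inr j)

/-- The relations of the presentation of `2^α.S_n`. -/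
def rels (n α : ℕ) : Set (FreeGroup (Gen n)) :=
  {r | r = zw n ^ 2
    ∨ (∃ j, r = tw n j ^ 2 * (zw n ^ α)⁻¹)
    ∨ (∃ j k : Fin (n - 1), (j : ℕ) + 1 = (k : ℕ) ∧
        r = (tw n j * tw n k) ^ 3 * (zw n ^ α)⁻¹)
    ∨ (∃ j, r = zw n * tw n j * (zw n)⁻¹ * (tw n j)⁻¹)
    ∨ (∃ j k : Fin (n - 1), 1 < Nat.dist (j : ℕ) (k : ℕ) ∧
        r = tw n j * tw n k * (zw n * tw n k * tw n j)⁻¹)}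

/-- The double cover `2^α.S_n` of the symmetric group `S_n`. -/
abbrev Cover (n α : ℕ) := PresentedGroup (rels n α)

/-- The central element `z` of `2^α.S_n`. -/
def z (n α : ℕ) : Cover n α := PresentedGroup.of (Sum.inl ())

/-- The generator `t_{j+1}` of `2^α.S_n`, lifting the transposition `(j+1, j+2)`. -/
def t (n α : ℕ) (j : Fin (n - 1)) : Cover n α := PresentedGroup.of (Sum.inr j)

end DoubleCover

/-- A subgroup is an elementary abelian 2-subgroup iff every element squares to `1`
(this forces it to be abelian). -/
def IsElemAbelianTwo {G : Type*} [Group G] (E : Subgroup G) : Prop :=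
  ∀ x ∈ E, x ^ 2 = 1

/-!
A coset enumeration over the words `t_n t_{n-1} ⋯ t_{n-m+1}` gives `|2^+.S_n| ≤ 2 · n!`, so the
projection `π : 2^+.S_n → S_n` has kernel `⟨z⟩`. If `z ∉ H`, adjoining the central involution
`z` enlarges `H`. If `z ∈ H`, then `H = {1, z, x, zx}` with `π x` a product of `k ≥ 1` disjoint
transpositions, so `x` is conjugate to `t_1 t_3 ⋯ t_{2k-1}` up to `z`. Lifts of products of `k`
and `l` disjoint transpositions with disjoint supports commute up to `z^{kl}`, so that word
squares to `z^{k(k-1)/2}`, and `2k ≤ n ≤ 15` leaves `k ∈ {1, 4, 5}`. For these `k` and `n ≥ 10`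
there is an involution `y` commuting with `x` and lifting a product of `4` or `1` transpositions,
so `π y ∉ π H` and `⟨H, y⟩` is elementary abelian.
-/

section ElementaryAbelian

variable {G : Type*} [Group G]

theorem isElemAbelianTwo_of_isKleinFour {H : Subgroup G} (hH : IsKleinFour H) :
    IsElemAbelianTwo H := fun g hg => by
  simpa [hH.exponent_two] using congrArg Subtype.val (Monoid.pow_exponent_eq_one (⟨g, hg⟩ : H))

theorem IsElemAbelianTwo.commute {H : Subgroup G} (hH : IsElemAbelianTwo H) {a b : G}
    (ha : a ∈ H) (hb : b ∈ H) : Commute a b := by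
  have self_inv : ∀ g ∈ H, g⁻¹ = g := fun g hg =>
    inv_eq_of_mul_eq_one_right (sq g ▸ hH g hg)
  calc a * b = (a * b)⁻¹ := (self_inv _ (mul_mem ha hb)).symm
    _ = b * a := by rw [mul_inv_rev, self_inv a ha, self_inv b hb]

theorem isElemAbelianTwo_closure {s : Set G} (hsq : ∀ a ∈ s, a ^ 2 = 1)
    (hcomm : ∀ a ∈ s, ∀ b ∈ s, Commute a b) : IsElemAbelianTwo (Subgroup.closure s) := by
  have := Subgroup.isMulCommutative_closure fun a ha b hb => (hcomm a ha b hb).eq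
  intro g hg
  induction hg using Subgroup.closure_induction with
  | mem a ha => exact hsq a ha
  | one => exact one_pow 2
  | mul a b ha hb iha ihb =>
    have hab : Commute a b := congrArg Subtype.val (this.is_comm.comm ⟨a, ha⟩ ⟨b, hb⟩)
    rw [hab.mul_pow, iha, ihb, one_mul]
  | inv a _ ih => rw [inv_pow, ih, inv_one]

theorem IsElemAbelianTwo.exists_gt {H : Subgroup G} (hH : IsElemAbelianTwo H) {y : G}
    (hy : y ^ 2 = 1) (hyH : ∀ h ∈ H, Commute h y) (hy' : y ∉ H) :
    ∃ E : Subgroup G, IsElemAbelianTwo E ∧ H < E := by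
  refine ⟨Subgroup.closure (insert y H), isElemAbelianTwo_closure ?_ ?_, ?_⟩
  · rintro a (rfl | ha)
    exacts [hy, hH a ha]
  · rintro a (rfl | ha) b (rfl | hb)
    exacts [Commute.refl _, (hyH b hb).symm, hyH a ha, hH.commute ha hb]
  · refine lt_of_le_of_ne (fun h hh => Subgroup.subset_closure (Or.inr hh)) fun hE => hy' ?_
    exact hE ▸ Subgroup.subset_closure (Set.mem_insert y _)

theorem IsKleinFour.exists_mem_ne {H : Subgroup G} (hH : IsKleinFour H) (a : G) :
    ∃ x ∈ H, x ≠ 1 ∧ x ≠ a := by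
  by_contra! h
  have hsub : (H : Set G) ⊆ {1, a} := fun g hg => (eq_or_ne g 1).imp_right (h g hg)
  have := (Set.ncard_le_ncard hsub (Set.toFinite _)).trans (Set.ncard_insert_le 1 {a})
  rw [Set.ncard_singleton, ← Nat.card_coe_set_eq, SetLike.coe_sort_coe, hH.card_four] at this
  omega

theorem IsKleinFour.eq_one_or_eq_or_eq_or_eq_mul {H : Subgroup G} (hH : IsKleinFour H)
    {a b g : G} (ha : a ∈ H) (hb : b ∈ H) (hg : g ∈ H) (ha1 : a ≠ 1) (hb1 : b ≠ 1)
    (hab : a ≠ b) : g = 1 ∨ g = a ∨ g = b ∨ g = a * b := by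
  by_contra! h
  obtain ⟨hg1, hga, hgb, hgab⟩ := h
  refine hgab (congrArg Subtype.val (IsKleinFour.eq_mul_of_ne_all
    (x := (⟨a, ha⟩ : H)) (y := ⟨b, hb⟩) (z := ⟨g, hg⟩) ?_ ?_ ?_ ?_ ?_ ?_))
  all_goals simpa [Subtype.ext_iff]

end ElementaryAbelian

namespace DoubleCover

open scoped Nat

variable {n m α : ℕ}

theorem mk_zw : PresentedGroup.mk (rels n α) (zw n) = z n α := rfl

theorem mk_tw (j : Fin (n - 1)) : PresentedGroup.mk (rels n α) (tw n j) = t n α j := rfl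

theorem z_sq : z n α ^ 2 = 1 := by
  have h := PresentedGroup.one_of_mem (rels := rels n α) (x := zw n ^ 2) (Or.inl rfl)
  rwa [map_pow, mk_zw] at h

theorem t_sq (j : Fin (n - 1)) : t n α j ^ 2 = z n α ^ α := by
  have h := PresentedGroup.one_of_mem (rels := rels n α) (x := tw n j ^ 2 * (zw n ^ α)⁻¹)
    (Or.inr (Or.inl ⟨j, rfl⟩))
  rwa [map_mul, map_inv, map_pow, map_pow, mk_zw, mk_tw, mul_inv_eq_one] at h

theorem t_mul_t_pow_three {j k : Fin (n - 1)} (h : (j : ℕ) + 1 = k) :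
    (t n α j * t n α k) ^ 3 = z n α ^ α := by
  have h := PresentedGroup.one_of_mem (rels := rels n α)
    (x := (tw n j * tw n k) ^ 3 * (zw n ^ α)⁻¹) (Or.inr (Or.inr (Or.inl ⟨j, k, h, rfl⟩)))
  rwa [map_mul, map_inv, map_pow, map_pow, map_mul, mk_zw, mk_tw, mk_tw, mul_inv_eq_one] at h

theorem commute_z_t (j : Fin (n - 1)) : Commute (z n α) (t n α j) := by
  have h := PresentedGroup.one_of_mem (rels := rels n α)
    (x := zw n * tw n j * (zw n)⁻¹ * (tw n j)⁻¹)
    (Or.inr (Or.inr (Or.inr (Or.inl ⟨j, rfl⟩))))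
  rwa [map_mul, map_mul, map_mul, map_inv, map_inv, mk_zw, mk_tw, mul_inv_eq_one,
    mul_inv_eq_iff_eq_mul] at h

theorem t_mul_t_of_one_lt_dist {j k : Fin (n - 1)} (h : 1 < Nat.dist j k) :
    t n α j * t n α k = z n α * (t n α k * t n α j) := by
  have h := PresentedGroup.one_of_mem (rels := rels n α)
    (x := tw n j * tw n k * (zw n * tw n k * tw n j)⁻¹)
    (Or.inr (Or.inr (Or.inr (Or.inr ⟨j, k, h, rfl⟩))))
  rwa [map_mul, map_inv, map_mul, map_mul, map_mul, mk_zw, mk_tw, mk_tw, mul_inv_eq_one,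
    mul_assoc (z n α)] at h

theorem commute_z (g : Cover n α) : Commute (z n α) g := by
  have hcentral : Subgroup.centralizer {z n α} = ⊤ := by
    rw [eq_top_iff, ← PresentedGroup.closure_range_of, Subgroup.closure_le]
    rintro _ ⟨_ | j, rfl⟩
    exacts [Subgroup.mem_centralizer_singleton_iff.2 rfl,
      Subgroup.mem_centralizer_singleton_iff.2 (commute_z_t j).eq.symm]
  exact (Subgroup.mem_centralizer_singleton_iff.1 (hcentral ▸ Subgroup.mem_top g)).symm

theorem z_pow_of_even {e : ℕ} (he : Even e) : z n α ^ e = 1 := by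
  obtain ⟨r, rfl⟩ := he
  rw [← two_mul, pow_mul, z_sq, one_pow]

def inclGen (α : ℕ) (h : n ≤ m) : Gen n → Cover m α
  | .inl _ => z m α
  | .inr j => t m α (Fin.castLE (Nat.sub_le_sub_right h 1) j)

theorem inclGen_rels (h : n ≤ m) : ∀ r ∈ rels n α, FreeGroup.lift (inclGen α h) r = 1 := by
  rintro r (rfl | ⟨j, rfl⟩ | ⟨j, k, hjk, rfl⟩ | ⟨j, rfl⟩ | ⟨j, k, hd, rfl⟩) <;>
    simp only [map_mul, map_pow, map_inv, zw, tw, FreeGroup.lift_apply_of, inclGen]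
  · exact z_sq
  · rw [t_sq, mul_inv_cancel]
  · rw [t_mul_t_pow_three (by simpa using hjk), mul_inv_cancel]
  · rw [(commute_z_t _).eq, mul_inv_cancel_right, mul_inv_cancel]
  · rw [t_mul_t_of_one_lt_dist (by simpa using hd), ← mul_assoc, mul_inv_cancel]

def incl (α : ℕ) (h : n ≤ m) : Cover n α →* Cover m α :=
  PresentedGroup.toGroup (inclGen_rels h)

@[simp]
theorem incl_z (h : n ≤ m) : incl α h (z n α) = z m α :=
  PresentedGroup.toGroup.of (inclGen_rels h)

@[simp]
theorem incl_t (h : n ≤ m) (j : Fin (n - 1)) :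
    incl α h (t n α j) = t m α (Fin.castLE (Nat.sub_le_sub_right h 1) j) :=
  PresentedGroup.toGroup.of (inclGen_rels h)

/-- `t_{a+1}`, indexed by a natural number, with junk value `1` out of range. -/
def tAt (n a : ℕ) : Cover n 0 := if h : a < n - 1 then t n 0 ⟨a, h⟩ else 1

theorem tAt_val (j : Fin (n - 1)) : tAt n j = t n 0 j := by rw [tAt, dif_pos j.isLt]

theorem tAt_mul_self (a : ℕ) : tAt n a * tAt n a = 1 := by
  unfold tAt
  split
  · rw [← sq, t_sq, pow_zero]
  · exact mul_one 1

theorem tAt_inv (a : ℕ) : (tAt n a)⁻¹ = tAt n a := inv_eq_of_mul_eq_one_right (tAt_mul_self a)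

theorem tAt_mul_tAt_of_one_lt_dist {a b : ℕ} (ha : a + 1 < n) (hb : b + 1 < n)
    (h : 1 < Nat.dist a b) : tAt n a * tAt n b = z n 0 * (tAt n b * tAt n a) := by
  simp only [tAt, dif_pos (show a < n - 1 by omega), dif_pos (show b < n - 1 by omega)]
  exact t_mul_t_of_one_lt_dist h

theorem tAt_braid {a : ℕ} (h : a + 2 < n) :
    tAt n a * tAt n (a + 1) * tAt n a = tAt n (a + 1) * tAt n a * tAt n (a + 1) := by
  set A := tAt n a
  set B := tAt n (a + 1)
  have hcube : (A * B) ^ 3 = 1 := by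
    simp only [A, B, tAt, dif_pos (show a < n - 1 by omega),
      dif_pos (show a + 1 < n - 1 by omega)]
    exact t_mul_t_pow_three rfl
  have h3 : A * B * A * (B * A * B) = 1 := by rw [← hcube, pow_three]; simp only [mul_assoc]
  calc A * B * A = (B * A * B)⁻¹ := eq_inv_of_mul_eq_one_left h3
    _ = B * A * B := by rw [mul_inv_rev, mul_inv_rev, tAt_inv, tAt_inv, mul_assoc]

/-- The word `t_{g 0 + 1} t_{g 1 + 1} ⋯ t_{g (m-1) + 1}`. -/
def tProd (n : ℕ) (g : ℕ → ℕ) : ℕ → Cover n 0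
  | 0 => 1
  | m + 1 => tProd n g m * tAt n (g m)

@[simp]
theorem tProd_zero (g : ℕ → ℕ) : tProd n g 0 = 1 := rfl

theorem tProd_succ (g : ℕ → ℕ) (m : ℕ) :
    tProd n g (m + 1) = tProd n g m * tAt n (g m) := rfl

theorem tProd_add (g : ℕ → ℕ) (k l : ℕ) :
    tProd n g (k + l) = tProd n g k * tProd n (fun i => g (k + i)) l := by
  induction l with
  | zero => rw [tProd_zero, mul_one, add_zero]
  | succ l ih => rw [← add_assoc, tProd_succ, ih, tProd_succ, mul_assoc]

theorem tProd_mul_tAt {g : ℕ → ℕ} {a : ℕ} (ha : a + 1 < n) :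
    ∀ {m}, (∀ i < m, g i + 1 < n ∧ 1 < Nat.dist (g i) a) →
      tProd n g m * tAt n a = z n 0 ^ m * (tAt n a * tProd n g m)
  | 0, _ => by rw [tProd_zero, one_mul, mul_one, pow_zero, one_mul]
  | m + 1, hg => by
    obtain ⟨hgm, hfar⟩ := hg m m.lt_succ_self
    calc tProd n g (m + 1) * tAt n a = tProd n g m * (tAt n (g m) * tAt n a) := by
          rw [tProd_succ, mul_assoc]
      _ = z n 0 * (tProd n g m * tAt n a) * tAt n (g m) := by
          rw [tAt_mul_tAt_of_one_lt_dist hgm ha hfar, (commute_z _).symm.left_comm, mul_assoc,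
            mul_assoc]
      _ = z n 0 ^ (m + 1) * (tAt n a * tProd n g (m + 1)) := by
          rw [tProd_mul_tAt ha fun i hi => hg i (by omega), tProd_succ, pow_succ']
          simp only [mul_assoc]

theorem tAt_mul_tProd {g : ℕ → ℕ} {a m : ℕ} (ha : a + 1 < n)
    (hg : ∀ i < m, g i + 1 < n ∧ 1 < Nat.dist (g i) a) :
    tAt n a * tProd n g m = z n 0 ^ m * (tProd n g m * tAt n a) := by
  rw [tProd_mul_tAt ha hg, ← mul_assoc, ← pow_add, ← two_mul, z_pow_of_even (even_two_mul m),
    one_mul]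

theorem tProd_mul_tProd {g h : ℕ → ℕ} {k : ℕ} (hg : ∀ i < k, g i + 1 < n) :
    ∀ {l}, (∀ j < l, h j + 1 < n ∧ ∀ i < k, 1 < Nat.dist (g i) (h j)) →
      tProd n g k * tProd n h l = z n 0 ^ (k * l) * (tProd n h l * tProd n g k)
  | 0, _ => by rw [tProd_zero, mul_one, one_mul, mul_zero, pow_zero, one_mul]
  | l + 1, hh => by
    obtain ⟨hhl, hfar⟩ := hh l l.lt_succ_self
    calc tProd n g k * tProd n h (l + 1) = tProd n g k * tProd n h l * tAt n (h l) := by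
          rw [tProd_succ, mul_assoc]
      _ = z n 0 ^ (k * l) * (tProd n h l * (tProd n g k * tAt n (h l))) := by
          rw [tProd_mul_tProd hg fun j hj => hh j (by omega)]
          simp only [mul_assoc]
      _ = z n 0 ^ (k * (l + 1)) * (tProd n h (l + 1) * tProd n g k) := by
          rw [tProd_mul_tAt hhl fun i hi => ⟨hg i hi, hfar i hi⟩, tProd_succ,
            ((commute_z _).pow_left k).symm.left_comm, mul_add, mul_one, pow_add]
          simp only [mul_assoc]

theorem tProd_sq {g : ℕ → ℕ} :
    ∀ {m}, (∀ i < m, g i + 1 < n ∧ ∀ j < i, 1 < Nat.dist (g j) (g i)) →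
      tProd n g m ^ 2 = z n 0 ^ m.choose 2
  | 0, _ => by rw [tProd_zero, one_pow, Nat.choose_zero_succ, pow_zero]
  | m + 1, hg => by
    obtain ⟨hgm, hfar⟩ := hg m m.lt_succ_self
    set P := tProd n g m
    set T := tAt n (g m)
    calc (P * T) ^ 2 = P * (T * P) * T := by rw [sq]; simp only [mul_assoc]
      _ = P * (z n 0 ^ m * (P * T)) * T := by
          rw [tAt_mul_tProd hgm fun i hi => ⟨(hg i (by omega)).1, hfar i hi⟩]
      _ = z n 0 ^ m * (P ^ 2 * (T * T)) := by
          rw [((commute_z P).pow_left m).symm.left_comm, sq]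
          simp only [mul_assoc]
      _ = z n 0 ^ (m + 1).choose 2 := by
          rw [tProd_sq fun i hi => hg i (by omega), tAt_mul_self, mul_one, ← pow_add,
            Nat.choose_succ_succ', Nat.choose_one_right, add_comm]

/-- `t_n t_{n-1} ⋯ t_{n-m+1}`; for `m ≤ n` these represent the right cosets of `2^+.S_n` in
`2^+.S_{n+1}`. -/
abbrev descWord (n m : ℕ) : Cover (n + 1) 0 := tProd (n + 1) (fun i => n - 1 - i) m

theorem descWord_succ (n m : ℕ) : descWord n (m + 1) = descWord n m * tAt (n + 1) (n - 1 - m) :=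
  rfl

theorem z_mem_range_incl : z (n + 1) 0 ∈ (incl 0 n.le_succ).range := ⟨z n 0, incl_z _⟩

theorem tAt_mem_range_incl {a : ℕ} (ha : a + 1 < n) :
    tAt (n + 1) a ∈ (incl 0 n.le_succ).range := by
  refine ⟨tAt n a, ?_⟩
  rw [tAt, tAt, dif_pos (show a < n - 1 by omega), dif_pos (show a < n + 1 - 1 by omega), incl_t]
  rfl

theorem descWord_mul_tAt_of_lt {a : ℕ} (h : a + 1 < n - m) :
    descWord n m * tAt (n + 1) a = z (n + 1) 0 ^ m * (tAt (n + 1) a * descWord n m) :=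
  tProd_mul_tAt (by omega) fun i hi => ⟨by omega, by simp only [Nat.dist]; omega⟩

theorem descWord_mul_tAt_of_gt {a : ℕ} (h : a < n) :
    ∀ {m}, m ≤ n → n - m < a →
      ∃ u ∈ (incl 0 n.le_succ).range, descWord n m * tAt (n + 1) a = u * descWord n m
  | 0, _, h' => absurd h' (by omega)
  | m + 1, hm, h' => by
    obtain hlt | rfl : n - m < a ∨ a = n - m := by omega
    · obtain ⟨u, hu, e⟩ := descWord_mul_tAt_of_gt h (by omega) hlt
      refine ⟨z (n + 1) 0 * u, mul_mem z_mem_range_incl hu, ?_⟩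
      rw [descWord_succ, mul_assoc, tAt_mul_tAt_of_one_lt_dist (by omega) (by omega)
        (by simp only [Nat.dist]; omega), (commute_z _).symm.left_comm, ← mul_assoc _ _ (tAt _ _),
        e]
      simp only [mul_assoc]
    · obtain ⟨m, rfl⟩ : ∃ k, m = k + 1 := ⟨m - 1, by omega⟩
      obtain ⟨b, hb0⟩ : ∃ b, n - 1 - (m + 1) = b := ⟨_, rfl⟩
      have hb1 : n - 1 - m = b + 1 := by omega
      have hnb : n - (m + 1) = b + 1 := by omega
      refine ⟨z (n + 1) 0 ^ m * tAt (n + 1) b, mul_mem (pow_mem z_mem_range_incl m)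
        (tAt_mem_range_incl (by omega)), ?_⟩
      calc descWord n (m + 1 + 1) * tAt (n + 1) (n - (m + 1))
          = descWord n m * (tAt (n + 1) b * tAt (n + 1) (b + 1) * tAt (n + 1) b) := by
            rw [hnb, tAt_braid (by omega), descWord_succ, descWord_succ, hb0, hb1]
            simp only [mul_assoc]
        _ = z (n + 1) 0 ^ m * tAt (n + 1) b * descWord n (m + 1 + 1) := by
            rw [← mul_assoc, ← mul_assoc, descWord_mul_tAt_of_lt (by omega), descWord_succ,
              descWord_succ, hb0, hb1]
            simp only [mul_assoc]

theorem descWord_mul_tAt {a : ℕ} (hm : m ≤ n) (ha : a < n) :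
    ∃ u ∈ (incl 0 n.le_succ).range, ∃ m' ≤ n,
      descWord n m * tAt (n + 1) a = u * descWord n m' := by
  obtain h | h | h | h : a + 1 < n - m ∨ a + 1 = n - m ∨ a = n - m ∨ n - m < a := by omega
  · exact ⟨_, mul_mem (pow_mem z_mem_range_incl m) (tAt_mem_range_incl (by omega)), m, hm,
      (descWord_mul_tAt_of_lt h).trans (mul_assoc _ _ _).symm⟩
  · refine ⟨1, one_mem _, m + 1, by omega, ?_⟩
    rw [one_mul, descWord_succ, show n - 1 - m = a by omega]
  · obtain ⟨m, rfl⟩ : ∃ k, m = k + 1 := ⟨m - 1, by omega⟩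
    refine ⟨1, one_mem _, m, by omega, ?_⟩
    rw [one_mul, descWord_succ, show n - 1 - m = a by omega, mul_assoc, tAt_mul_self, mul_one]
  · obtain ⟨u, hu, e⟩ := descWord_mul_tAt_of_gt ha hm h
    exact ⟨u, hu, m, hm, e⟩

theorem exists_eq_mul_descWord (g : Cover (n + 1) 0) :
    ∃ u ∈ (incl 0 n.le_succ).range, ∃ m ≤ n, g = u * descWord n m := by
  have step : ∀ x y, y ∈ Set.range PresentedGroup.of →
      (∃ u ∈ (incl 0 n.le_succ).range, ∃ m ≤ n, x = u * descWord n m) →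
      ∃ u ∈ (incl 0 n.le_succ).range, ∃ m ≤ n, x * y = u * descWord n m := by
    rintro x _ ⟨⟨⟩ | j, rfl⟩ ⟨u, hu, m, hm, rfl⟩
    · refine ⟨u * z (n + 1) 0, mul_mem hu z_mem_range_incl, m, hm, ?_⟩
      change u * descWord n m * z (n + 1) 0 = _
      rw [mul_assoc, ← (commute_z _).eq, mul_assoc]
    · obtain ⟨v, hv, m', hm', e⟩ := descWord_mul_tAt (a := j) hm j.isLt
      refine ⟨u * v, mul_mem hu hv, m', hm', ?_⟩
      change u * descWord n m * t (n + 1) 0 j = _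
      rw [← tAt_val, mul_assoc, e, mul_assoc]
  have hg : g ∈ Subgroup.closure (Set.range PresentedGroup.of) := by
    rw [PresentedGroup.closure_range_of]; trivial
  induction hg using Subgroup.closure_induction_right with
  | one => exact ⟨1, one_mem _, 0, Nat.zero_le n, by rw [one_mul]; rfl⟩
  | mul_right x _ y hy ih => exact step x y hy ih
  | mul_inv_cancel x _ y hy ih =>
    obtain ⟨j, rfl⟩ := hy
    have hinv : (PresentedGroup.of j)⁻¹ = (PresentedGroup.of j : Cover (n + 1) 0) := by
      rcases j with _ | j
      · exact inv_eq_of_mul_eq_one_right ((sq _).symm.trans z_sq)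
      · change (t (n + 1) 0 j)⁻¹ = t (n + 1) 0 j
        rw [← tAt_val, tAt_inv]
    rw [hinv]
    exact step x _ ⟨j, rfl⟩ ih

theorem finite_and_card_le (n : ℕ) : Finite (Cover n 0) ∧ Nat.card (Cover n 0) ≤ 2 * n ! := by
  induction n with
  | zero =>
    have htop : Subgroup.zpowers (z 0 0) = ⊤ := eq_top_iff.2 fun g _ =>
      PresentedGroup.generated_by _ _ (fun j => by
        rcases j with _ | j
        exacts [Subgroup.mem_zpowers _, j.elim0]) g
    have hcard : Nat.card (Cover 0 0) = orderOf (z 0 0) := by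
      rw [← Nat.card_zpowers, htop, Subgroup.card_top]
    have hpos : 0 < orderOf (z 0 0) :=
      (isOfFinOrder_iff_pow_eq_one.2 ⟨2, two_pos, z_sq⟩).orderOf_pos
    exact ⟨Nat.finite_of_card_ne_zero (by omega),
      hcard ▸ orderOf_le_of_pow_eq_one two_pos z_sq⟩
  | succ n ih =>
    obtain ⟨hfin, hcard⟩ := ih
    let F : Cover n 0 × Fin (n + 1) → Cover (n + 1) 0 := fun p =>
      incl 0 n.le_succ p.1 * descWord n p.2
    have hF : Function.Surjective F := fun g => by
      obtain ⟨_, ⟨u, rfl⟩, m, hm, rfl⟩ := exists_eq_mul_descWord g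
      exact ⟨(u, ⟨m, by omega⟩), rfl⟩
    refine ⟨Finite.of_surjective F hF, ?_⟩
    calc Nat.card (Cover (n + 1) 0) ≤ Nat.card (Cover n 0 × Fin (n + 1)) :=
          Nat.card_le_card_of_surjective F hF
      _ = Nat.card (Cover n 0) * (n + 1) := by rw [Nat.card_prod, Nat.card_fin]
      _ ≤ 2 * (n + 1)! := by rw [Nat.factorial_succ]; nlinarith

def permGen (n : ℕ) : Gen n → Equiv.Perm (Fin n)
  | .inl _ => 1
  | .inr j => Equiv.swap ⟨j, by omega⟩ ⟨j + 1, by omega⟩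

theorem permGen_rels : ∀ r ∈ rels n 0, FreeGroup.lift (permGen n) r = 1 := by
  rintro r (rfl | ⟨j, rfl⟩ | ⟨⟨j, hj⟩, ⟨_, hk⟩, rfl, rfl⟩ | ⟨j, rfl⟩ |
      ⟨⟨j, hj⟩, ⟨k, hk⟩, hd, rfl⟩) <;>
    simp only [map_mul, map_pow, map_inv, zw, tw, FreeGroup.lift_apply_of, permGen, pow_zero,
      inv_one, mul_one, one_mul, one_pow]
  · rw [sq, Equiv.swap_mul_self]
  · simp only at hk
    have h3 := Equiv.Perm.isThreeCycle_swap_mul_swap_same (a := (⟨j + 1, by omega⟩ : Fin n))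
      (b := ⟨j, by omega⟩) (c := ⟨j + 1 + 1, by omega⟩) (by simp) (by simp)
      (by simp only [ne_eq, Fin.mk.injEq]; omega)
    rw [Equiv.swap_comm, ← h3.orderOf]
    exact pow_orderOf_eq_one _
  · rw [mul_inv_cancel]
  · rw [mul_inv_eq_one]
    refine (Equiv.Perm.disjoint_swap_swap ?_).commute
    simp only [Nat.dist] at hd
    simp only [List.nodup_cons, List.mem_cons, List.not_mem_nil, List.nodup_nil, Fin.ext_iff,
      or_false, not_false_eq_true, and_true]
    omega

def pi (n : ℕ) : Cover n 0 →* Equiv.Perm (Fin n) :=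
  PresentedGroup.toGroup permGen_rels

@[simp]
theorem pi_z : pi n (z n 0) = 1 := PresentedGroup.toGroup.of permGen_rels

@[simp]
theorem pi_t (j : Fin (n - 1)) :
    pi n (t n 0 j) = Equiv.swap ⟨j, by omega⟩ ⟨j + 1, by omega⟩ :=
  PresentedGroup.toGroup.of permGen_rels

theorem pi_tAt {a : ℕ} (h : a + 1 < n) :
    pi n (tAt n a) = Equiv.swap ⟨a, by omega⟩ ⟨a + 1, h⟩ := by
  rw [tAt, dif_pos (by omega), pi_t]

theorem pi_surjective : Function.Surjective (pi n) := by
  rcases n with _ | n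
  · exact fun σ => ⟨1, Subsingleton.elim _ _⟩
  · rw [← MonoidHom.mrange_eq_top, eq_top_iff, ← Equiv.Perm.mclosure_swap_castSucc_succ,
      Submonoid.closure_le]
    rintro _ ⟨i, rfl⟩
    exact ⟨t (n + 1) 0 i, by rw [pi_t]; rfl⟩

theorem ker_pi (hz : orderOf (z n 0) = 2) : (pi n).ker = Subgroup.zpowers (z n 0) := by
  obtain ⟨hfin, hcard⟩ := finite_and_card_le n
  have hle : Subgroup.zpowers (z n 0) ≤ (pi n).ker := Subgroup.zpowers_le.2 pi_z
  have hker : Nat.card (pi n).ker * n ! = Nat.card (Cover n 0) := by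
    rw [← (pi n).ker.card_mul_index, Subgroup.index_ker, MonoidHom.range_eq_top_of_surjective _
      pi_surjective, Subgroup.card_top, Nat.card_perm, Nat.card_fin]
  refine (Subgroup.eq_of_le_of_card_ge hle ?_).symm
  rw [Nat.card_zpowers, hz]
  nlinarith [n.factorial_pos]

theorem eq_one_or_eq_z_of_pi_eq_one (hz : orderOf (z n 0) = 2) {g : Cover n 0}
    (hg : pi n g = 1) : g = 1 ∨ g = z n 0 := by
  classical
  have := (finite_and_card_le n).1
  have hg : g ∈ Subgroup.zpowers (z n 0) := ker_pi hz ▸ hg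
  rw [mem_zpowers_iff_mem_range_orderOf, hz] at hg
  simp only [Finset.range_add_one, Finset.range_zero, insert_empty_eq, Finset.image_insert,
    pow_one, Finset.image_singleton, pow_zero, Finset.mem_insert, Finset.mem_singleton] at hg
  exact hg.symm

/-- The lift `t_{c+1} t_{c+3} ⋯ t_{c+2k-1}` of the product of the `k` disjoint transpositions
`(c+1, c+2)(c+3, c+4)⋯(c+2k-1, c+2k)`. -/
def pairWord (n c k : ℕ) : Cover n 0 := tProd n (fun i => c + 2 * i) k

theorem pairWord_add (c k l : ℕ) :
    pairWord n c (k + l) = pairWord n c k * pairWord n (c + 2 * k) l := by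
  simp only [pairWord, tProd_add, mul_add, add_assoc]

theorem pairWord_sq {c k : ℕ} (h : c + 2 * k ≤ n) : pairWord n c k ^ 2 = z n 0 ^ k.choose 2 :=
  tProd_sq fun i _ => ⟨by omega, fun j _ => by simp only [Nat.dist]; omega⟩

theorem commute_pairWord {c d k l : ℕ} (hcd : c + 2 * k ≤ d) (hd : d + 2 * l ≤ n)
    (he : Even (k * l)) : Commute (pairWord n c k) (pairWord n d l) := by
  rw [Commute, SemiconjBy, pairWord, pairWord, tProd_mul_tProd (fun i _ => by omega)
    fun j _ => ⟨by omega, fun i _ => by simp only [Nat.dist]; omega⟩, z_pow_of_even he, one_mul]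

theorem pi_tProd_apply_of_ne {g : ℕ → ℕ} :
    ∀ {m}, (∀ i < m, g i + 1 < n) → ∀ x : Fin n,
      (∀ i < m, (x : ℕ) ≠ g i ∧ (x : ℕ) ≠ g i + 1) → pi n (tProd n g m) x = x
  | 0, _, x, _ => by rw [tProd_zero, map_one, Equiv.Perm.one_apply]
  | m + 1, hg, x, hx => by
    obtain ⟨h0, h1⟩ := hx m m.lt_succ_self
    rw [tProd_succ, map_mul, Equiv.Perm.mul_apply, pi_tAt (hg m m.lt_succ_self),
      Equiv.swap_apply_of_ne_of_ne (by simpa [Fin.ext_iff]) (by simpa [Fin.ext_iff]),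
      pi_tProd_apply_of_ne (fun i hi => hg i (by omega)) x fun i hi => hx i (by omega)]

theorem cycleType_pi_tProd {g : ℕ → ℕ} :
    ∀ {m}, (∀ i < m, g i + 1 < n ∧ ∀ j < i, 1 < Nat.dist (g j) (g i)) →
      (pi n (tProd n g m)).cycleType = Multiset.replicate m 2
  | 0, _ => by rw [tProd_zero, map_one, Equiv.Perm.cycleType_one, Multiset.replicate_zero]
  | m + 1, hg => by
    obtain ⟨hgm, hfar⟩ := hg m m.lt_succ_self
    have hdisj :
        (pi n (tProd n g m)).Disjoint (Equiv.swap ⟨g m, by omega⟩ ⟨g m + 1, hgm⟩) := by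
      intro x
      by_cases hx : (x : ℕ) = g m ∨ (x : ℕ) = g m + 1
      · refine Or.inl (pi_tProd_apply_of_ne (fun i hi => (hg i (by omega)).1) x fun i hi => ?_)
        have := hfar i hi
        simp only [Nat.dist] at this
        omega
      · refine Or.inr (Equiv.swap_apply_of_ne_of_ne ?_ ?_) <;> simp only [ne_eq, Fin.ext_iff] <;>
          omega
    rw [tProd_succ, map_mul, pi_tAt hgm, hdisj.cycleType_mul,
      cycleType_pi_tProd fun i hi => hg i (by omega),
      Equiv.Perm.isSwap_iff_cycleType.1 (Equiv.Perm.swap_isSwap_iff.2 (by simp [Fin.ext_iff])),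
      Multiset.replicate_succ, ← Multiset.singleton_add, add_comm]

theorem cycleType_pi_pairWord {c k : ℕ} (h : c + 2 * k ≤ n) :
    (pi n (pairWord n c k)).cycleType = Multiset.replicate k 2 :=
  cycleType_pi_tProd fun i _ => ⟨by omega, fun j _ => by simp only [Nat.dist]; omega⟩

theorem exists_eq_conj_pairWord (hz : orderOf (z n 0) = 2) {x : Cover n 0} (hx : x ^ 2 = 1)
    (hx1 : pi n x ≠ 1) :
    ∃ k, 0 < k ∧ 2 * k ≤ n ∧ ∃ r : Cover n 0,
      x = MulAut.conj r (pairWord n 0 k) ∨ x = z n 0 * MulAut.conj r (pairWord n 0 k) := by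
  have hσ : (pi n x).cycleType = Multiset.replicate (pi n x).cycleType.card 2 :=
    Equiv.Perm.cycleType_of_pow_prime_eq_one (by rw [← map_pow, hx, map_one])
  set k := (pi n x).cycleType.card
  have hk : 0 < k := Multiset.card_pos.2 (mt Equiv.Perm.cycleType_eq_zero.1 hx1)
  have hkn : 2 * k ≤ n := by
    have : (pi n x).cycleType.sum ≤ n := by simpa using (pi n x).sum_cycleType_le
    rw [hσ, Multiset.sum_replicate, smul_eq_mul] at this
    omega
  obtain ⟨ρ, hρ⟩ := isConj_iff.1 (Equiv.Perm.isConj_iff_cycleType_eq.2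
    ((cycleType_pi_pairWord (c := 0) (by omega)).trans hσ.symm))
  obtain ⟨r, rfl⟩ := pi_surjective ρ
  have hker : pi n (x * (MulAut.conj r (pairWord n 0 k))⁻¹) = 1 := by
    rw [map_mul, map_inv, MulAut.conj_apply, map_mul, map_mul, map_inv, hρ, mul_inv_cancel]
  refine ⟨k, hk, hkn, r, ?_⟩
  rcases eq_one_or_eq_z_of_pi_eq_one hz hker with h | h
  exacts [Or.inl (mul_inv_eq_one.1 h), Or.inr (mul_inv_eq_iff_eq_mul.1 h)]

theorem exists_commute_pairWord (hn : 10 ≤ n) {k : ℕ} (hk : k = 1 ∨ k = 4 ∨ k = 5) :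
    ∃ c l, c + 2 * l ≤ n ∧ l ≠ 0 ∧ l ≠ k ∧ pairWord n c l ^ 2 = 1 ∧
      Commute (pairWord n 0 k) (pairWord n c l) := by
  have hsq : ∀ {c l}, c + 2 * l ≤ n → Even (l.choose 2) → pairWord n c l ^ 2 = 1 :=
    fun h he => (pairWord_sq h).trans (z_pow_of_even he)
  rcases hk with rfl | rfl | rfl
  · exact ⟨2, 4, by omega, by omega, by omega, hsq (by omega) (by decide),
      commute_pairWord le_rfl (by omega) (by decide)⟩
  · exact ⟨8, 1, by omega, by omega, by omega, hsq (by omega) (by decide),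
      commute_pairWord le_rfl (by omega) (by decide)⟩
  · refine ⟨8, 1, by omega, by omega, by omega, hsq (by omega) (by decide), ?_⟩
    rw [pairWord_add 0 4 1]
    exact (commute_pairWord le_rfl (by omega) (by decide)).mul_left (Commute.refl _)

theorem exists_commuting_involution (hn : 10 ≤ n ∧ n ≤ 15) (hz : orderOf (z n 0) = 2)
    {x : Cover n 0} (hx : x ^ 2 = 1) (hx1 : pi n x ≠ 1) :
    ∃ y, y ^ 2 = 1 ∧ Commute x y ∧ pi n y ≠ 1 ∧ pi n y ≠ pi n x := by
  obtain ⟨k, hk, hkn, r, hxr⟩ := exists_eq_conj_pairWord hz hx hx1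
  have hsq : pairWord n 0 k ^ 2 = 1 := by
    have : MulAut.conj r (pairWord n 0 k) ^ 2 = 1 := by
      rcases hxr with rfl | rfl
      · exact hx
      · rwa [(commute_z _).mul_pow, z_sq, one_mul] at hx
    rwa [← map_pow, MulEquiv.map_eq_one_iff] at this
  have heven : 2 ∣ k.choose 2 := by
    have := orderOf_dvd_of_pow_eq_one ((pairWord_sq (by omega)).symm.trans hsq)
    rwa [hz] at this
  have hk' : k = 1 ∨ k = 4 ∨ k = 5 := by
    have : k ≤ 7 := by omega
    interval_cases k <;> revert heven <;> decide
  obtain ⟨c, l, hcl, hl0, hlk, hy, hwy⟩ := exists_commute_pairWord hn.1 hk'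
  have hcycle : ∀ {d j}, d + 2 * j ≤ n →
      (pi n (MulAut.conj r (pairWord n d j))).cycleType = Multiset.replicate j 2 := fun h => by
    rw [MulAut.conj_apply, map_mul, map_mul, map_inv, Equiv.Perm.cycleType_conj,
      cycleType_pi_pairWord h]
  have hpix : pi n x = pi n (MulAut.conj r (pairWord n 0 k)) := by
    rcases hxr with rfl | rfl
    · rfl
    · rw [map_mul, pi_z, one_mul]
  refine ⟨MulAut.conj r (pairWord n c l), by rw [← map_pow, hy, map_one], ?_, fun h => hl0 ?_,
    fun h => hlk ?_⟩
  · rcases hxr with rfl | rfl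
    · exact hwy.map _
    · exact (commute_z _).mul_left (hwy.map _)
  · have := congrArg Equiv.Perm.cycleType h
    rw [hcycle hcl, Equiv.Perm.cycleType_one] at this
    simpa using congrArg Multiset.card this
  · have := congrArg Equiv.Perm.cycleType h
    rw [hpix, hcycle hcl, hcycle (by omega : 0 + 2 * k ≤ n)] at this
    simpa using congrArg Multiset.card this

end DoubleCover

open DoubleCover in
/-- For `10 ≤ n ≤ 15`, the double cover `G = 2^+.S_n` has no maximal
Klein-four subgroups: every Klein-four subgroup of `G` is properly contained in a strictly
larger elementary abelian 2-subgroup of `G`. -/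
theorem no_maximal_klein_four_in_two_plus_Sn
    (n : ℕ) (hn : 10 ≤ n ∧ n ≤ 15)
    (hz : orderOf (DoubleCover.z n 0) = 2)
    (H : Subgroup (DoubleCover.Cover n 0)) (hH : IsKleinFour H) :
    ∃ E : Subgroup (DoubleCover.Cover n 0), IsElemAbelianTwo E ∧ H < E := by
  have hH2 := isElemAbelianTwo_of_isKleinFour hH
  by_cases hzH : z n 0 ∈ H
  · have hz1 : z n 0 ≠ 1 := fun h => by rw [h, orderOf_one] at hz; omega
    obtain ⟨x, hxH, hx1, hxz⟩ := hH.exists_mem_ne (z n 0)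
    have hmem := fun g (hg : g ∈ H) =>
      hH.eq_one_or_eq_or_eq_or_eq_mul hzH hxH hg hz1 hx1 (Ne.symm hxz)
    have hpix : pi n x ≠ 1 := fun h => (eq_one_or_eq_z_of_pi_eq_one hz h).elim hx1 hxz
    obtain ⟨y, hy2, hxy, hy1, hyx⟩ := exists_commuting_involution hn hz (hH2 x hxH) hpix
    refine hH2.exists_gt hy2 (fun g hg => ?_) fun hyH => ?_
    · rcases hmem g hg with rfl | rfl | rfl | rfl
      exacts [Commute.one_left y, commute_z y, hxy, (commute_z y).mul_left hxy]
    · rcases hmem y hyH with rfl | rfl | rfl | rfl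
      exacts [hy1 (map_one _), hy1 pi_z, hyx rfl, hyx (by rw [map_mul, pi_z, one_mul])]
  · exact hH2.exists_gt z_sq (fun g _ => (commute_z g).symm) hzH
end

section
/- Let n ∈ {4, 5} and let G = 2^−.S_n (the presented group with α = 1). Then every Sylow 2-subgroup of G is isomorphic to the generalized quaternion group of order 16. -/
/-! Modulo the central involution `z`, the generators `t_j` of `2^α.S_n` satisfy the Coxeter
relations of type `A_{n-1}`, and the usual coset enumeration bounds such a group by `n!`; hence
`|2^α.S_n| ≤ 2 · n!`. For `n ≤ 5` the permutation representation, together with a 4-dimensional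
representation over `𝔽₁₇` sending `z` to `-1`, shows that the order is exactly `2 · n!` and that
the two representations are jointly faithful. In `2^-.S_4` the lifts `x = t₁t₂t₃` and `y = t₂t₁t₂`
of `(1 2 3 4)` and `(1 3)` therefore satisfy `x⁴ = y² = z` and `xy = yx⁻¹`, as one checks in the
two representations, so they generate a copy of `Q₁₆` in `2^-.S_n` for every `n ≥ 4`. Since `16`
is the full `2`-part of `2 · 4!` and of `2 · 5!`, this copy is a Sylow subgroup, and all Sylow
subgroups are conjugate. -/

open Set Pointwise

section GroupLemmas

variable {G : Type*} [Group G]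

lemma braid_of_pow_three_eq_one {a b : G} (ha : a * a = 1) (hb : b * b = 1)
    (hab : (a * b) ^ 3 = 1) : a * b * a = b * a * b := by
  have h : a * b * a * (b * a * b) = 1 := by
    rw [← hab]; simp only [pow_succ, pow_zero, one_mul, mul_assoc]
  rw [eq_inv_of_mul_eq_one_left h, mul_inv_rev, mul_inv_rev, inv_eq_of_mul_eq_one_right ha,
    inv_eq_of_mul_eq_one_right hb, mul_assoc]

lemma Subgroup.normal_of_le_center {N : Subgroup G} (h : N ≤ center G) : N.Normal :=
  ⟨fun a ha g => by rwa [mem_center_iff.mp (h ha) g, mul_inv_cancel_right]⟩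

lemma Sylow.nonempty_mulEquiv_of_injective {p : ℕ} [Fact p.Prime] [Finite G] {H : Type*}
    [Group H] (hH : IsPGroup p H) (f : H →* G) (hf : Function.Injective f) {m : ℕ}
    (hcard : Nat.card G = Nat.card H * m) (hm : ¬ p ∣ m) (P : Sylow p G) :
    Nonempty (P ≃* H) := by
  have := Finite.of_injective f hf
  let e : H ≃* f.range := MonoidHom.ofInjective hf
  have hindex : f.range.index = m := by
    have := f.range.card_mul_index
    rw [hcard, ← Nat.card_congr e.toEquiv] at this
    exact Nat.eq_of_mul_eq_mul_left Nat.card_pos this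
  exact ⟨(P.equiv ((hH.of_equiv e).toSylow (hindex ▸ hm))).trans e.symm⟩

end GroupLemmas

namespace MonoidHom

variable {G Q K : Type*} [Group G] [Group Q] [Group K]

lemma card_ker_mul_card_of_surjective (π : G →* Q) (hπ : Function.Surjective π) :
    Nat.card π.ker * Nat.card Q = Nat.card G := by
  rw [← π.ker.card_mul_index, Subgroup.index_ker, π.range_eq_top.mpr hπ, Subgroup.card_top]

variable [Finite G] (π : G →* Q) (hπ : Function.Surjective π) (hG : Nat.card G ≤ 2 * Nat.card Q)
  {z : G} (hz : π z = 1) (hz1 : z ≠ 1)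
include hπ hG hz hz1

lemma card_ker_eq_two_of_card_le_two_mul : Nat.card π.ker = 2 := by
  have hQ : 0 < Nat.card Q := by
    have := Finite.of_surjective π hπ
    exact Nat.card_pos
  have hker : 1 < Nat.card π.ker :=
    (Subgroup.one_lt_card_iff_ne_bot _).mpr fun h => hz1 ((Subgroup.mem_bot).mp (h ▸ hz))
  have := π.card_ker_mul_card_of_surjective hπ
  nlinarith

lemma card_eq_two_mul_of_card_le_two_mul : Nat.card G = 2 * Nat.card Q := by
  rw [← π.card_ker_mul_card_of_surjective hπ, card_ker_eq_two_of_card_le_two_mul π hπ hG hz hz1]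

lemma injective_prod_of_card_le_two_mul (φ : G →* K) (hφz : φ z ≠ 1) :
    Function.Injective (π.prod φ) := by
  have hker := card_ker_eq_two_of_card_le_two_mul π hπ hG hz hz1
  rw [← ker_eq_bot_iff, ker_prod, ← Subgroup.card_eq_one]
  have hdvd : Nat.card ↥(π.ker ⊓ φ.ker) ∣ 2 := hker ▸ Subgroup.card_dvd_of_le inf_le_left
  refine ((Nat.dvd_prime Nat.prime_two).mp hdvd).resolve_right fun h2 => hφz ?_
  have heq : π.ker ⊓ φ.ker = π.ker :=
    Subgroup.eq_of_le_of_card_ge inf_le_left (by rw [h2, hker])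
  have hzk : z ∈ π.ker := hz
  rw [← heq] at hzk
  exact hzk.2

end MonoidHom

lemma ZMod.pow_val_add {n : ℕ} [NeZero n] {G : Type*} [Monoid G] {x : G} (hx : x ^ n = 1)
    (i j : ZMod n) : x ^ (i + j).val = x ^ i.val * x ^ j.val := by
  rw [ZMod.val_add, ← pow_eq_pow_mod _ hx, pow_add]

lemma ZMod.pow_val_sub {n : ℕ} [NeZero n] {G : Type*} [Group G] {x : G} (hx : x ^ n = 1)
    (i j : ZMod n) : x ^ (i - j).val = x ^ i.val * (x ^ j.val)⁻¹ := by
  rw [eq_mul_inv_iff_mul_eq, ← ZMod.pow_val_add hx, sub_add_cancel]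

namespace QuaternionGroup

variable {n : ℕ} [NeZero n] {G : Type*} [Group G] {x y : G}

lemma val_natCast_self : (n : ZMod (2 * n)).val = n :=
  ZMod.val_cast_of_lt (by have := NeZero.pos n; omega)

def lift (x y : G) (hx : x ^ (2 * n) = 1) (hy : y ^ 2 = x ^ n) (hxy : x * y = y * x⁻¹) :
    QuaternionGroup n →* G where
  toFun
    | a i => x ^ i.val
    | xa i => y * x ^ i.val
  map_one' := by rw [one_def]; show x ^ (0 : ZMod (2 * n)).val = 1; rw [ZMod.val_zero, pow_zero]
  map_mul' := by
    have hpow (k : ℕ) : x ^ k * y = y * (x ^ k)⁻¹ := by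
      simpa [inv_pow] using ((SemiconjBy.pow_right hxy.symm k).symm : _)
    have hcomm (k l : ℕ) : (x ^ k)⁻¹ * x ^ l = x ^ l * (x ^ k)⁻¹ :=
      (Commute.pow_pow_self x k l).inv_left.eq
    rintro (i | i) (j | j)
    · exact ZMod.pow_val_add hx i j
    · show y * x ^ (j - i).val = x ^ i.val * (y * x ^ j.val)
      rw [ZMod.pow_val_sub hx, ← mul_assoc (x ^ i.val), hpow, mul_assoc, hcomm]
    · show y * x ^ (i + j).val = y * x ^ i.val * x ^ j.val
      rw [ZMod.pow_val_add hx, mul_assoc]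
    · show x ^ ((n : ZMod (2 * n)) + j - i).val = y * x ^ i.val * (y * x ^ j.val)
      calc x ^ ((n : ZMod (2 * n)) + j - i).val = y ^ 2 * (x ^ j.val * (x ^ i.val)⁻¹) := by
            rw [ZMod.pow_val_sub hx, ZMod.pow_val_add hx, val_natCast_self, hy, mul_assoc]
        _ = y * (x ^ i.val * y) * x ^ j.val := by
            rw [hpow, sq, ← hcomm]; simp only [mul_assoc]
        _ = y * x ^ i.val * (y * x ^ j.val) := by simp only [mul_assoc]

@[simp] lemma lift_a (hx : x ^ (2 * n) = 1) (hy : y ^ 2 = x ^ n) (hxy : x * y = y * x⁻¹)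
    (i : ZMod (2 * n)) : lift x y hx hy hxy (a i) = x ^ i.val := rfl

lemma lift_injective (hx : orderOf x = 2 * n) (hy : y ^ 2 = x ^ n) (hxy : x * y = y * x⁻¹) :
    Function.Injective (lift x y (hx ▸ pow_orderOf_eq_one x) hy hxy) := by
  rw [injective_iff_map_eq_one]
  rintro (i | i) h
  · rw [lift_a, ← orderOf_dvd_iff_pow_eq_one, hx] at h
    rw [one_def, ← (ZMod.val_eq_zero i).mp (Nat.eq_zero_of_dvd_of_lt h (ZMod.val_lt i))]
  · have hxn : x ^ n = 1 := by
      rw [← val_natCast_self (n := n), ← lift_a (hx ▸ pow_orderOf_eq_one x) hy hxy, ← xa_sq i,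
        map_pow, h, one_pow]
    exact absurd hxn (pow_ne_one_of_lt_orderOf (NeZero.ne n) (by have := NeZero.pos n; omega))

end QuaternionGroup

section CoxeterA

variable {G : Type*} [Group G] {M : ℕ} {s : ℕ → G}

structure IsCoxeterA (M : ℕ) (s : ℕ → G) : Prop where
  mul_self : ∀ i < M, s i * s i = 1
  braid : ∀ i, i + 1 < M → s i * s (i + 1) * s i = s (i + 1) * s i * s (i + 1)
  comm : ∀ i j, i + 1 < j → j < M → Commute (s i) (s j)

lemma IsCoxeterA.mono {M' : ℕ} (h : IsCoxeterA M s) (hle : M' ≤ M) : IsCoxeterA M' s :=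
  ⟨fun i hi => h.mul_self i (by omega), fun i hi => h.braid i (by omega),
    fun i j hij hj => h.comm i j hij (by omega)⟩

-- right coset representatives of `⟨s 0, …, s (m - 1)⟩` in `⟨s 0, …, s m⟩`
def descProd (s : ℕ → G) (m : ℕ) : ℕ → G
  | 0 => 1
  | k + 1 => descProd s m k * s (m - k)

variable {m : ℕ}

lemma IsCoxeterA.descProd_mul_of_add_lt (h : IsCoxeterA (m + 1) s) {j k : ℕ} (hjk : j + k < m) :
    descProd s m k * s j = s j * descProd s m k := by
  induction k with
  | zero => simp [descProd]
  | succ k ih =>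
    rw [descProd, mul_assoc, ← (h.comm j (m - k) (by omega) (by omega)).eq, ← mul_assoc,
      ih (by omega), mul_assoc]

lemma IsCoxeterA.descProd_mul_of_lt_add (h : IsCoxeterA (m + 1) s) {j k : ℕ} (hj : j ≤ m)
    (hk : k ≤ m + 1) (hjk : m + 1 < j + k) :
    descProd s m k * s j = s (j - 1) * descProd s m k := by
  induction k with
  | zero => omega
  | succ k ih =>
    rcases Nat.lt_or_ge (m + 1) (j + k) with hlt | hle
    · rw [descProd, mul_assoc, (h.comm (m - k) j (by omega) (by omega)).eq, ← mul_assoc,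
        ih (by omega) hlt, mul_assoc]
    · -- `descProd s m (k + 1)` ends in `s j * s (j - 1)`, so the braid relation applies
      obtain ⟨k, rfl⟩ : ∃ k', k = k' + 1 := ⟨k - 1, by omega⟩
      have hb := h.braid (j - 1) (by omega)
      rw [show j - 1 + 1 = j by omega] at hb
      rw [descProd, descProd, show m - (k + 1) = j - 1 by omega, show m - k = j by omega]
      calc descProd s m k * s j * s (j - 1) * s j
          = descProd s m k * (s (j - 1) * s j * s (j - 1)) := by rw [hb]; group
        _ = s (j - 1) * (descProd s m k * s j * s (j - 1)) := by
          rw [← mul_assoc, ← mul_assoc, h.descProd_mul_of_add_lt (by omega)]; group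

lemma IsCoxeterA.mul_descProd_mul_mem (h : IsCoxeterA (m + 1) s) {g : G}
    (hg : g ∈ Subgroup.closure (s '' Iio m)) {j k : ℕ} (hj : j ≤ m) (hk : k ≤ m + 1) :
    g * descProd s m k * s j ∈
      (Subgroup.closure (s '' Iio m) : Set G) * descProd s m '' Iic (m + 1) := by
  have hgs {i : ℕ} (hi : i < m) : g * s i ∈ Subgroup.closure (s '' Iio m) :=
    mul_mem hg (Subgroup.subset_closure ⟨i, hi, rfl⟩)
  rcases lt_trichotomy (j + k) m with hlt | heq | hgt
  · refine ⟨g * s j, hgs (by omega), descProd s m k, ⟨k, hk, rfl⟩, ?_⟩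
    simp only [mul_assoc, h.descProd_mul_of_add_lt hlt]
  · refine ⟨g, hg, descProd s m (k + 1), ⟨k + 1, by simp; omega, rfl⟩, ?_⟩
    rw [descProd, show m - k = j by omega, mul_assoc]
  rcases Nat.lt_or_ge (m + 1) (j + k) with hgt' | hle
  · refine ⟨g * s (j - 1), hgs (by omega), descProd s m k, ⟨k, hk, rfl⟩, ?_⟩
    simp only [mul_assoc, h.descProd_mul_of_lt_add hj hk hgt']
  · obtain ⟨k, rfl⟩ : ∃ k', k = k' + 1 := ⟨k - 1, by omega⟩
    refine ⟨g, hg, descProd s m k, ⟨k, by simp; omega, rfl⟩, ?_⟩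
    simp only [descProd, show m - k = j by omega, mul_assoc, h.mul_self j (by omega), mul_one]

lemma IsCoxeterA.closure_succ_subset (h : IsCoxeterA (m + 1) s) :
    (Subgroup.closure (s '' Iio (m + 1)) : Set G) ⊆
      (Subgroup.closure (s '' Iio m) : Set G) * descProd s m '' Iic (m + 1) := by
  intro g hg
  induction hg using Subgroup.closure_induction_right with
  | one => exact ⟨1, one_mem _, 1, ⟨0, by simp, rfl⟩, one_mul 1⟩
  | mul_right g _ _ hj ih =>
    obtain ⟨j, hj, rfl⟩ := hj
    obtain ⟨g, hg, _, ⟨k, hk, rfl⟩, rfl⟩ := ih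
    exact h.mul_descProd_mul_mem hg (by rw [mem_Iio] at hj; omega) hk
  | mul_inv_cancel g _ _ hj ih =>
    obtain ⟨j, hj, rfl⟩ := hj
    rw [inv_eq_of_mul_eq_one_right (h.mul_self j hj)]
    obtain ⟨g, hg, _, ⟨k, hk, rfl⟩, rfl⟩ := ih
    exact h.mul_descProd_mul_mem hg (by rw [mem_Iio] at hj; omega) hk

lemma IsCoxeterA.card_closure_le (h : IsCoxeterA M s) :
    (Subgroup.closure (s '' Iio M) : Set G).Finite ∧
      Nat.card (Subgroup.closure (s '' Iio M)) ≤ (M + 1).factorial := by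
  induction M with
  | zero => simp
  | succ m ih =>
    obtain ⟨hfin, hcard⟩ := ih (h.mono m.le_succ)
    have hD : (descProd s m '' Iic (m + 1)).Finite := (finite_Iic _).image _
    refine ⟨(hfin.mul hD).subset h.closure_succ_subset, ?_⟩
    calc Nat.card (Subgroup.closure (s '' Iio (m + 1)))
        ≤ Nat.card ↥((Subgroup.closure (s '' Iio m) : Set G) * descProd s m '' Iic (m + 1)) :=
          Nat.card_mono (hfin.mul hD) h.closure_succ_subset
      _ ≤ Nat.card (Subgroup.closure (s '' Iio m)) * Nat.card ↥(descProd s m '' Iic (m + 1)) :=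
          natCard_mul_le
      _ ≤ (m + 1).factorial * (m + 2) := by
          gcongr
          calc Nat.card ↥(descProd s m '' Iic (m + 1)) ≤ Nat.card ↥(Iic (m + 1)) :=
                Nat.card_image_le (finite_Iic _)
            _ = m + 2 := by simp
      _ = (m + 2).factorial := by rw [mul_comm]; rfl

lemma Fin.extend_val_image_Iio {H : Type*} [One H] (t : Fin M → H) :
    Function.extend Fin.val t 1 '' Iio M = range t := by
  ext g
  constructor
  · rintro ⟨i, hi, rfl⟩
    exact ⟨⟨i, hi⟩, (Fin.val_injective.extend_apply _ _ ⟨i, hi⟩).symm⟩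
  · rintro ⟨j, rfl⟩
    exact ⟨j, j.isLt, Fin.val_injective.extend_apply _ _ j⟩

end CoxeterA

namespace DoubleCover

variable {n α : ℕ} {H : Type*} [Group H]

structure SatisfiesRels (α : ℕ) (z : H) (t : Fin (n - 1) → H) : Prop where
  z_sq : z ^ 2 = 1
  t_sq : ∀ j, t j ^ 2 = z ^ α
  braid : ∀ j k : Fin (n - 1), (j : ℕ) + 1 = k → (t j * t k) ^ 3 = z ^ α
  commute_z : ∀ j, Commute z (t j)
  anticomm : ∀ j k : Fin (n - 1), 1 < Nat.dist j k → t j * t k = z * t k * t j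

lemma lift_mem_rels_eq_one_iff {z : H} {t : Fin (n - 1) → H} :
    (∀ r ∈ rels n α, FreeGroup.lift (Sum.elim (fun _ => z) t) r = 1) ↔ SatisfiesRels α z t := by
  simp only [rels, Set.mem_ofPred_eq, or_imp, forall_and, forall_eq, forall_exists_index, and_imp,
    forall_comm (α := FreeGroup (Gen n)), zw, tw, map_mul, map_pow, map_inv,
    FreeGroup.lift_apply_of, Sum.elim_inl, Sum.elim_inr, mul_inv_eq_iff_eq_mul, one_mul]
  exact ⟨fun ⟨h₁, h₂, h₃, h₄, h₅⟩ => ⟨h₁, h₂, h₃, h₄, h₅⟩,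
    fun ⟨h₁, h₂, h₃, h₄, h₅⟩ => ⟨h₁, h₂, h₃, h₄, h₅⟩⟩

def SatisfiesRels.lift {z : H} {t : Fin (n - 1) → H} (h : SatisfiesRels α z t) :
    Cover n α →* H :=
  PresentedGroup.toGroup (lift_mem_rels_eq_one_iff.mpr h)

@[simp] lemma SatisfiesRels.lift_z {z : H} {t : Fin (n - 1) → H} (h : SatisfiesRels α z t) :
    h.lift (DoubleCover.z n α) = z :=
  PresentedGroup.toGroup.of _

@[simp] lemma SatisfiesRels.lift_t {z : H} {t : Fin (n - 1) → H} (h : SatisfiesRels α z t)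
    (j : Fin (n - 1)) : h.lift (DoubleCover.t n α j) = t j :=
  PresentedGroup.toGroup.of _

lemma satisfiesRels_z_t : SatisfiesRels α (z n α) (t n α) := by
  refine lift_mem_rels_eq_one_iff.mp fun r hr => ?_
  have : FreeGroup.lift (Sum.elim (fun _ => z n α) (t n α)) = PresentedGroup.mk (rels n α) := by
    ext (_ | j) <;> rfl
  rw [this]
  exact PresentedGroup.one_of_mem hr

lemma SatisfiesRels.map {K : Type*} [Group K] {z : H} {t : Fin (n - 1) → H}
    (h : SatisfiesRels α z t) (f : H →* K) : SatisfiesRels α (f z) (f ∘ t) where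
  z_sq := by rw [← map_pow, h.z_sq, map_one]
  t_sq j := by simp only [Function.comp_apply, ← map_pow, h.t_sq]
  braid j k hjk := by simp only [Function.comp_apply, ← map_mul, ← map_pow, h.braid j k hjk]
  commute_z j := (h.commute_z j).map f
  anticomm j k hjk := by simp only [Function.comp_apply, ← map_mul, h.anticomm j k hjk]

lemma SatisfiesRels.isCoxeterA {t : Fin (n - 1) → H} (h : SatisfiesRels α 1 t) :
    IsCoxeterA (n - 1) (Function.extend Fin.val t 1) := by
  have ht (i : ℕ) (hi : i < n - 1) : Function.extend Fin.val t 1 i = t ⟨i, hi⟩ :=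
    Fin.val_injective.extend_apply _ _ ⟨i, hi⟩
  have hsq (j : Fin (n - 1)) : t j * t j = 1 := by rw [← sq, h.t_sq, one_pow]
  refine ⟨fun i hi => ?_, fun i hi => ?_, fun i j hij hj => ?_⟩
  · rw [ht i hi]
    exact hsq _
  · rw [ht i (by omega), ht (i + 1) hi]
    exact braid_of_pow_three_eq_one (hsq _) (hsq _) (by rw [h.braid _ _ rfl, one_pow])
  · rw [ht i (by omega), ht j hj]
    have := h.anticomm ⟨i, by omega⟩ ⟨j, hj⟩ (by simp only [Nat.dist]; omega)
    rwa [one_mul] at this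

lemma closure_range_map_t_eq_top {f : Cover n α →* H} (hf : Function.Surjective f)
    (hz : f (z n α) = 1) : Subgroup.closure (range (f ∘ t n α)) = ⊤ := by
  rw [eq_top_iff, ← f.range_eq_top.mpr hf, MonoidHom.range_eq_map,
    ← PresentedGroup.closure_range_of, MonoidHom.map_closure, Subgroup.closure_le]
  rintro _ ⟨_, ⟨_ | j, rfl⟩, rfl⟩
  · exact hz ▸ one_mem _
  · exact Subgroup.subset_closure ⟨j, rfl⟩

lemma z_mem_center : z n α ∈ Subgroup.center (Cover n α) := by
  refine Subgroup.mem_center_iff.mpr fun g => ?_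
  have hle : Subgroup.closure (range PresentedGroup.of) ≤ Subgroup.centralizer {z n α} := by
    rw [Subgroup.closure_le]
    rintro _ ⟨_ | j, rfl⟩
    · exact Subgroup.mem_centralizer_singleton_iff.mpr rfl
    · exact Subgroup.mem_centralizer_singleton_iff.mpr (satisfiesRels_z_t.commute_z j).eq.symm
  rw [PresentedGroup.closure_range_of] at hle
  exact Subgroup.mem_centralizer_singleton_iff.mp (hle (Subgroup.mem_top g))

instance : (Subgroup.zpowers (z n α)).Normal :=
  Subgroup.normal_of_le_center (Subgroup.zpowers_le.mpr z_mem_center)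

lemma finite_and_card_le_two_mul_factorial :
    Finite (Cover n α) ∧ Nat.card (Cover n α) ≤ 2 * n.factorial := by
  set N := Subgroup.zpowers (z n α)
  have hz : QuotientGroup.mk' N (z n α) = 1 :=
    (QuotientGroup.eq_one_iff _).mpr (Subgroup.mem_zpowers _)
  have hcox := (hz ▸ satisfiesRels_z_t.map (QuotientGroup.mk' N)).isCoxeterA.card_closure_le
  rw [Fin.extend_val_image_Iio, closure_range_map_t_eq_top (QuotientGroup.mk'_surjective N) hz,
    Subgroup.coe_top, finite_univ_iff, Subgroup.card_top,
    show (n - 1 + 1).factorial = n.factorial by cases n <;> rfl] at hcox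
  obtain ⟨_, hcard⟩ := hcox
  have hz2 : z n α ^ 2 = 1 := satisfiesRels_z_t.z_sq
  have hcardG : Nat.card (Cover n α) = Nat.card (Cover n α ⧸ N) * orderOf (z n α) := by
    rw [Subgroup.card_eq_card_quotient_mul_card_subgroup N, Nat.card_zpowers]
  refine ⟨Nat.finite_of_card_ne_zero ?_, ?_⟩ <;> rw [hcardG]
  · exact (Nat.mul_pos Nat.card_pos
      (orderOf_pos_iff.mpr (isOfFinOrder_iff_pow_eq_one.mpr ⟨2, two_pos, hz2⟩))).ne'
  · rw [mul_comm]
    exact Nat.mul_le_mul (orderOf_le_of_pow_eq_one two_pos hz2) hcard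

instance : Finite (Cover n α) := finite_and_card_le_two_mul_factorial.1

lemma card_le_two_mul_card_perm : Nat.card (Cover n α) ≤ 2 * Nat.card (Equiv.Perm (Fin n)) := by
  rw [Nat.card_perm, Nat.card_fin]
  exact finite_and_card_le_two_mul_factorial.2

def swapGen (n : ℕ) (j : Fin (n - 1)) : Equiv.Perm (Fin n) :=
  Equiv.swap ⟨j, by omega⟩ ⟨j + 1, by omega⟩

lemma satisfiesRels_swapGen : SatisfiesRels α 1 (swapGen n) where
  z_sq := one_pow 2
  t_sq j := by rw [one_pow, sq, swapGen, Equiv.swap_mul_self]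
  braid j k hjk := by
    have hk : (⟨j + 1, by omega⟩ : Fin n) = ⟨k, by omega⟩ := Fin.ext hjk
    rw [one_pow, swapGen, swapGen, hk, Equiv.swap_comm,
      ← (Equiv.Perm.isThreeCycle_swap_mul_swap_same (α := Fin n) _ _ _).orderOf, pow_orderOf_eq_one]
    all_goals simp only [ne_eq, Fin.mk.injEq]; omega
  commute_z _ := Commute.one_left _
  anticomm j k hjk := by
    rw [one_mul]
    refine (Equiv.Perm.disjoint_swap_swap ?_).commute
    simp only [Nat.dist] at hjk
    simp only [List.nodup_cons, List.mem_cons, Fin.ext_iff, List.not_mem_nil, or_false,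
      List.nodup_nil, and_true, not_false_eq_true]
    omega

def toPerm (n α : ℕ) : Cover n α →* Equiv.Perm (Fin n) := satisfiesRels_swapGen.lift

lemma toPerm_surjective : Function.Surjective (toPerm n α) := by
  rcases n with _ | m
  · exact fun σ => ⟨1, Subsingleton.elim _ _⟩
  rw [← MonoidHom.range_eq_top, eq_top_iff]
  intro σ _
  have hle : Submonoid.closure (range fun i : Fin m => Equiv.swap i.castSucc i.succ) ≤
      (toPerm (m + 1) α).range.toSubmonoid := by
    rw [Submonoid.closure_le]
    rintro _ ⟨i, rfl⟩
    exact ⟨t (m + 1) α i, satisfiesRels_swapGen.lift_t (n := m + 1) i⟩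
  exact hle (Equiv.Perm.mclosure_swap_castSucc_succ m ▸ Submonoid.mem_top σ)

-- the images of `t₁, …, t₄` in a 4-dimensional representation of `2^-.S_5` over `𝔽₁₇`
def spinMatrix : Fin 4 → Matrix (Fin 4) (Fin 4) (ZMod 17) :=
  ![!![0, 0, 9, 0; 0, 0, 0, 9; 15, 0, 0, 0; 0, 15, 0, 0],
    !![0, 5, 3, 0; 5, 0, 0, 3; 14, 0, 0, 12; 0, 14, 12, 0],
    !![0, 9, 0, 0; 15, 0, 0, 0; 0, 0, 0, 8; 0, 0, 2, 0],
    !![5, 3, 0, 0; 14, 12, 0, 0; 0, 0, 12, 14; 0, 0, 3, 5]]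

lemma spinMatrix_mul_self (i : Fin 4) : spinMatrix i * spinMatrix i = -1 := by
  revert i; decide

def spinGen (i : Fin 4) : (Matrix (Fin 4) (Fin 4) (ZMod 17))ˣ :=
  ⟨spinMatrix i, -spinMatrix i, by rw [mul_neg, spinMatrix_mul_self, neg_neg],
    by rw [neg_mul, spinMatrix_mul_self, neg_neg]⟩

lemma satisfiesRels_spinGen (hn : n ≤ 5) :
    SatisfiesRels 1 (-1) fun j : Fin (n - 1) => spinGen (Fin.castLE (by omega) j) where
  z_sq := neg_one_sq
  t_sq j := Units.ext (by simp [sq, spinGen, spinMatrix_mul_self])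
  braid j k hjk := by
    have : ∀ i j : Fin 4, (i : ℕ) + 1 = j → (spinGen i * spinGen j) ^ 3 = -1 := by decide
    simpa using this _ _ hjk
  commute_z _ := Commute.neg_one_left _
  anticomm j k hjk := by
    have : ∀ i j : Fin 4, 1 < Nat.dist i j →
        spinGen i * spinGen j = -1 * spinGen j * spinGen i := by
      decide
    exact this _ _ hjk

def spinRep (hn : n ≤ 5) : Cover n 1 →* (Matrix (Fin 4) (Fin 4) (ZMod 17))ˣ :=
  (satisfiesRels_spinGen hn).lift

lemma z_ne_one (hn : n ≤ 5) : z n 1 ≠ 1 := fun h => by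
  have := (satisfiesRels_spinGen hn).lift_z
  rw [h, map_one] at this
  exact absurd this (by decide)

lemma card_cover (hn : n ≤ 5) : Nat.card (Cover n 1) = 2 * n.factorial := by
  rw [(toPerm n 1).card_eq_two_mul_of_card_le_two_mul toPerm_surjective card_le_two_mul_card_perm
    satisfiesRels_swapGen.lift_z (z_ne_one hn), Nat.card_perm, Nat.card_fin]

lemma injective_toPerm_prod_spinRep (hn : n ≤ 5) :
    Function.Injective ((toPerm n 1).prod (spinRep hn)) :=
  (toPerm n 1).injective_prod_of_card_le_two_mul toPerm_surjective card_le_two_mul_card_perm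
    satisfiesRels_swapGen.lift_z (z_ne_one hn) _
    (by simp only [spinRep, SatisfiesRels.lift_z]; decide)

lemma SatisfiesRels.comp_castLE {m : ℕ} {z : H} {t : Fin (n - 1) → H} (h : SatisfiesRels α z t)
    (hmn : m ≤ n) : SatisfiesRels α z (t ∘ Fin.castLE (n := m - 1) (by omega)) where
  z_sq := h.z_sq
  t_sq _ := h.t_sq _
  braid _ _ hjk := h.braid _ _ hjk
  commute_z _ := h.commute_z _
  anticomm _ _ hjk := h.anticomm _ _ hjk

def castLE {m : ℕ} (hmn : m ≤ n) : Cover m α →* Cover n α :=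
  (satisfiesRels_z_t.comp_castLE hmn).lift

@[simp] lemma castLE_z {m : ℕ} (hmn : m ≤ n) : castLE (α := α) hmn (z m α) = z n α :=
  SatisfiesRels.lift_z _

def quatX : Cover 4 1 := t 4 1 0 * t 4 1 1 * t 4 1 2

def quatY : Cover 4 1 := t 4 1 1 * t 4 1 0 * t 4 1 1

lemma quatX_pow_four : quatX ^ 4 = z 4 1 :=
  injective_toPerm_prod_spinRep (by norm_num : 4 ≤ 5) (by
    simp only [quatX, MonoidHom.prod_apply, map_mul, map_pow, toPerm, spinRep,
      SatisfiesRels.lift_t, SatisfiesRels.lift_z]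
    decide)

lemma quatY_sq : quatY ^ 2 = z 4 1 :=
  injective_toPerm_prod_spinRep (by norm_num : 4 ≤ 5) (by
    simp only [quatY, MonoidHom.prod_apply, map_mul, map_pow, toPerm, spinRep,
      SatisfiesRels.lift_t, SatisfiesRels.lift_z]
    decide)

lemma quatX_mul_quatY : quatX * quatY = quatY * quatX⁻¹ :=
  injective_toPerm_prod_spinRep (by norm_num : 4 ≤ 5) (by
    simp only [quatX, quatY, MonoidHom.prod_apply, map_mul, map_inv, toPerm, spinRep,
      SatisfiesRels.lift_t]
    decide)

lemma exists_injective_quaternionGroup (hn : 4 ≤ n) (hz : z n 1 ≠ 1) :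
    ∃ f : QuaternionGroup 4 →* Cover n 1, Function.Injective f := by
  set φ := castLE (α := 1) hn
  have hx : φ quatX ^ 4 = z n 1 := by rw [← map_pow, quatX_pow_four, castLE_z]
  have hord : orderOf (φ quatX) = 2 * 4 := orderOf_eq_prime_pow (p := 2) (n := 2)
    (by rwa [show 2 ^ 2 = 4 from rfl, hx])
    (by rw [show 2 ^ (2 + 1) = 4 * 2 from rfl, pow_mul, hx, satisfiesRels_z_t.z_sq])
  refine ⟨_, QuaternionGroup.lift_injective hord (y := φ quatY) ?_ ?_⟩
  · rw [← map_pow, quatY_sq, hx, castLE_z]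
  · rw [← map_mul, quatX_mul_quatY, map_mul, map_inv]

end DoubleCover

theorem sylow_two_of_two_minus_S4_S5_is_Q16_general
    (n : ℕ) (hn : n = 4 ∨ n = 5)
    (P : Sylow 2 (DoubleCover.Cover n 1)) :
    Nonempty (↥(P : Subgroup (DoubleCover.Cover n 1)) ≃* QuaternionGroup 4) := by
  have h45 : 4 ≤ n ∧ n ≤ 5 := by omega
  obtain ⟨ψ, hψ⟩ := DoubleCover.exists_injective_quaternionGroup h45.1 (DoubleCover.z_ne_one h45.2)
  have hQ : Nat.card (QuaternionGroup 4) = 2 ^ 4 := by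
    rw [Nat.card_eq_fintype_card, QuaternionGroup.card]; rfl
  obtain ⟨m, hm, hodd⟩ : ∃ m, Nat.card (DoubleCover.Cover n 1) = 2 ^ 4 * m ∧ ¬ 2 ∣ m := by
    rw [DoubleCover.card_cover h45.2]
    rcases hn with rfl | rfl
    exacts [⟨3, by decide, by decide⟩, ⟨15, by decide, by decide⟩]
  exact Sylow.nonempty_mulEquiv_of_injective (IsPGroup.of_card hQ) ψ hψ (hQ ▸ hm) hodd P

/-- For `n ∈ {4, 5}`, every Sylow 2-subgroup of `G = 2^-.S_n` is
isomorphic to the generalized quaternion group of order 16. -/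
theorem sylow_two_of_two_minus_S4_S5_is_Q16
    (n : ℕ) (hn : n = 4 ∨ n = 5)
    (hz : orderOf (DoubleCover.z n 1) = 2)
    (P : Sylow 2 (DoubleCover.Cover n 1)) :
    Nonempty (↥(P : Subgroup (DoubleCover.Cover n 1)) ≃* QuaternionGroup 4) :=
  sylow_two_of_two_minus_S4_S5_is_Q16_general n hn P
end

section
/- Let n ∈ {6, 7} and d ∈ {3, 6}, and let G = d.A_n be the d-fold cover of the alternating group A_n. Then every Sylow 3-subgroup P of G is extraspecial of order 27 and exponent 3; that is, |P| = 27, P is nonabelian, and every element of P has order dividing 3. -/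
/-!
Since `|G| = |A_n| * d`, a Sylow `3`-subgroup `P` has order `27`. It is nonabelian: an element
`z ∈ Z` of order `3` is central, hence lies in `P`, and lies in `[G, G] = G`; if `P` were abelian,
the transfer `G → P` would kill `z` and send it to `z ^ [G : P]`, which is impossible as `[G : P]`
is prime to `3`.

For the exponent, the image in `A_n` of `x ∈ P` has order dividing `3` (there are no `9`-cycles
for `n < 9`), and such permutations are conjugate in `A_n` to their inverses because their
centralizers in `S_n` contain odd permutations. Lifting a conjugating element gives
`g x g⁻¹ = w x⁻¹` with `w ∈ Z`; as `x ^ 3 ∈ Z` is central, `x ^ 6 = w ^ 3`, so `x ^ (2 * d) = 1`,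
and together with `x ^ 27 = 1` this forces `x ^ 3 = 1`.
-/

open Equiv Equiv.Perm Subgroup

namespace Equiv.Perm

variable {α : Type*} [Fintype α] [DecidableEq α]

theorem pow_prime_eq_one_of_pow_prime_pow_eq_one {p k : ℕ} [hp : Fact p.Prime]
    (hα : Fintype.card α < p ^ 2) {σ : Perm α} (h : σ ^ p ^ k = 1) : σ ^ p = 1 := by
  refine pow_prime_eq_one_iff.mpr fun c hc => ?_
  obtain ⟨i, -, rfl⟩ := (Nat.dvd_prime_pow hp.out).mp
    ((dvd_of_mem_cycleType hc).trans (orderOf_dvd_of_pow_eq_one h))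
  have hlow : 2 ≤ p ^ i := two_le_of_mem_cycleType hc
  have hhigh : p ^ i < p ^ 2 :=
    ((le_card_support_of_mem_cycleType hc).trans (Finset.card_le_univ _)).trans_lt hα
  rw [Nat.pow_lt_pow_iff_right hp.out.one_lt] at hhigh
  interval_cases i
  · simp at hlow
  · rw [pow_one]

theorem not_centralizer_le_alternatingGroup_of_pow_three_eq_one (h5 : 5 ≤ Fintype.card α)
    {σ : Perm α} (h : σ ^ 3 = 1) : ¬centralizer {σ} ≤ alternatingGroup α := by
  have : Fact (Nat.Prime 3) := ⟨Nat.prime_three⟩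
  have hσ : σ.cycleType = Multiset.replicate (Multiset.card σ.cycleType) 3 :=
    Multiset.eq_replicate_card.mpr (pow_prime_eq_one_iff.mp h)
  rw [centralizer_le_alternating_iff, hσ]
  rintro ⟨-, hcard, hcount⟩
  have hcount3 := hcount 3
  simp only [Multiset.count_replicate_self, Multiset.sum_replicate, smul_eq_mul] at hcount3 hcard
  omega

end Equiv.Perm

namespace alternatingGroup

variable {α : Type*} [Fintype α] [DecidableEq α]

theorem pow_prime_eq_one_of_pow_prime_pow_eq_one {p k : ℕ} [Fact p.Prime]
    (hα : Fintype.card α < p ^ 2) {σ : alternatingGroup α} (h : σ ^ p ^ k = 1) : σ ^ p = 1 :=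
  Subtype.ext <| by
    simpa using Equiv.Perm.pow_prime_eq_one_of_pow_prime_pow_eq_one hα (congrArg Subtype.val h)

theorem isConj_of_not_centralizer_le {σ τ : alternatingGroup α}
    (hc : IsConj (σ : Perm α) τ) (hσ : ¬centralizer {(σ : Perm α)} ≤ alternatingGroup α) :
    IsConj σ τ := by
  obtain ⟨π, hπ⟩ := isConj_iff.mp hc
  obtain ⟨ρ, hρc, hρA⟩ := SetLike.not_le_iff_exists.mp hσ
  have hρσ : ρ * σ = σ * ρ := mem_centralizer_singleton_iff.mp hρc
  have hρ : sign ρ = -1 := (Int.units_eq_one_or _).resolve_left hρA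
  have heven : ∃ π' : Perm α, sign π' = 1 ∧ π' * σ * π'⁻¹ = τ := by
    rcases Int.units_eq_one_or (sign π) with h | h
    · exact ⟨π, h, hπ⟩
    · refine ⟨π * ρ, by simp [h, hρ], ?_⟩
      rw [← hπ, mul_inv_rev, mul_assoc π, hρσ]
      group
  obtain ⟨π', hπ', hconj⟩ := heven
  exact isConj_iff.mpr ⟨⟨π', hπ'⟩, Subtype.ext hconj⟩

theorem isConj_inv_of_pow_three_eq_one (h5 : 5 ≤ Fintype.card α) {σ : alternatingGroup α}
    (h : σ ^ 3 = 1) : IsConj σ σ⁻¹ :=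
  isConj_of_not_centralizer_le (isConj_iff_cycleType_eq.mpr (cycleType_inv _).symm)
    (not_centralizer_le_alternatingGroup_of_pow_three_eq_one h5
      (by exact_mod_cast congrArg Subtype.val h))

end alternatingGroup

section Sylow

variable {G : Type*} [Group G] {p : ℕ}

theorem Sylow.card_eq_pow_of_card_eq_pow_mul [Finite G] [hp : Fact p.Prime] (P : Sylow p G)
    {k m : ℕ} (hG : Nat.card G = p ^ k * m) (hm : ¬p ∣ m) : Nat.card P = p ^ k := by
  have hm0 : 0 < m := Nat.pos_of_ne_zero fun h => hm (h ▸ dvd_zero p)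
  have hsplit := Nat.ordProj_mul_ordCompl_eq_self (p ^ k * m) p
  rw [Nat.ordCompl_pow_mul_of_not_dvd k hp.out hm] at hsplit
  rw [P.card_eq_multiplicity, hG]
  exact Nat.eq_of_mul_eq_mul_right hm0 hsplit

theorem IsPGroup.le_sylow_of_le_center {H : Subgroup G} (hH : IsPGroup p H)
    (hHc : H ≤ center G) (P : Sylow p G) : H ≤ P := by
  have h := hH.inf_normalizer_sylow P
  rwa [inf_eq_left.mpr (hHc.trans (center_le_normalizer _)), eq_comm, inf_eq_left] at h

open scoped IsMulCommutative in
theorem Sylow.eq_one_of_mem_center_of_mem_commutator [Finite G] [Fact p.Prime] (P : Sylow p G)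
    [IsMulCommutative P] {z : G} (hzc : z ∈ center G) (hzP : z ∈ P) (hz : z ∈ commutator G) :
    z = 1 := by
  have htransfer : (MonoidHom.id P).transfer z = ⟨z ^ P.index, _⟩ :=
    MonoidHom.transfer_eq_pow _ z fun k g₀ _ => by
      rw [mem_center_iff.mp (pow_mem hzc k) g₀⁻¹, inv_mul_cancel_right]
  have hpow : z ^ P.index = 1 := by
    have := Abelianization.commutator_subset_ker ((MonoidHom.id P).transfer) hz
    rw [MonoidHom.mem_ker, htransfer] at this
    exact congrArg Subtype.val this
  exact orderOf_eq_one_iff.mp <| Nat.eq_one_of_dvd_coprimes P.card_coprime_index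
    (P.orderOf_dvd_natCard hzP) (orderOf_dvd_of_pow_eq_one hpow)

theorem Sylow.exists_mul_ne_mul_of_dvd_card_center [Finite G] [hp : Fact p.Prime]
    (hG : commutator G = ⊤) (hpZ : p ∣ Nat.card (center G)) (P : Sylow p G) :
    ∃ x y : P, x * y ≠ y * x := by
  by_contra! hcomm
  have : IsMulCommutative P := isMulCommutative_iff.mpr hcomm
  obtain ⟨z, hz⟩ := exists_prime_orderOf_dvd_card' p hpZ
  have hzp : IsPGroup p (zpowers (z : G)) :=
    IsPGroup.of_card (n := 1) (by rw [Nat.card_zpowers, orderOf_coe, hz, pow_one])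
  have hzP : (z : G) ∈ P := hzp.le_sylow_of_le_center (zpowers_le.mpr z.2) P (mem_zpowers _)
  have hz1 := P.eq_one_of_mem_center_of_mem_commutator z.2 hzP (hG ▸ mem_top _)
  rw [← orderOf_coe, hz1, orderOf_one] at hz
  exact hp.out.one_lt.ne hz

end Sylow

section CentralQuotient

variable {G : Type*} [Group G]

theorem pow_two_mul_eq_of_mem_center {x g : G} {m : ℕ} (hw : g * x * g⁻¹ * x ∈ center G)
    (hx : x ^ m ∈ center G) : x ^ (2 * m) = (g * x * g⁻¹ * x) ^ m := by
  set w := g * x * g⁻¹ * x with hwdef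
  have hconj : g * x * g⁻¹ = w * x⁻¹ := by rw [hwdef]; group
  have hxm : x ^ m = w ^ m * x⁻¹ ^ m := calc
    x ^ m = g * x ^ m * g⁻¹ := by rw [mem_center_iff.mp hx g, mul_inv_cancel_right]
    _ = (w * x⁻¹) ^ m := by rw [← hconj, conj_pow]
    _ = w ^ m * x⁻¹ ^ m := Commute.mul_pow (mem_center_iff.mp hw x⁻¹).symm m
  rw [two_mul, pow_add]
  nth_rewrite 1 [hxm]
  rw [inv_pow, inv_mul_cancel_right]

theorem pow_two_mul_card_eq_one_of_isConj_inv {Z : Subgroup G} [Z.Normal] (hZ : Z ≤ center G)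
    {x : G} {m : ℕ} (hm : m ∣ Nat.card Z) (hx : (x : G ⧸ Z) ^ m = 1)
    (hreal : IsConj (x : G ⧸ Z) (x : G ⧸ Z)⁻¹) : x ^ (2 * Nat.card Z) = 1 := by
  obtain ⟨c, hc⟩ := isConj_iff.mp hreal
  obtain ⟨g, rfl⟩ := QuotientGroup.mk_surjective c
  have hw : g * x * g⁻¹ * x ∈ Z := by
    rw [← QuotientGroup.eq_one_iff]
    simp [hc]
  have hxm : x ^ m ∈ Z := by rwa [← QuotientGroup.eq_one_iff, QuotientGroup.mk_pow]
  obtain ⟨k, hk⟩ := hm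
  rw [hk, ← mul_assoc, pow_mul, pow_two_mul_eq_of_mem_center (hZ hw) (hZ hxm), ← pow_mul, ← hk]
  exact orderOf_dvd_iff_pow_eq_one.mp (Z.orderOf_dvd_natCard hw)

end CentralQuotient

theorem card_alternatingGroup_fin_mul_eq_three_pow_mul {n d : ℕ} (hn : n = 6 ∨ n = 7)
    (hd : d = 3 ∨ d = 6) : ∃ m, ¬3 ∣ m ∧ Nat.card (alternatingGroup (Fin n)) * d = 3 ^ 3 * m := by
  rcases hn with rfl | rfl <;> rcases hd with rfl | rfl <;>
    rw [nat_card_alternatingGroup, Nat.card_eq_fintype_card, Fintype.card_fin] <;>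
    exact ⟨_, by decide, (Nat.mul_div_cancel' (by decide)).symm⟩

theorem sylow_three_of_exceptional_covers_extraspecial_general
    (n d : ℕ) (hn : n = 6 ∨ n = 7) (hd : d = 3 ∨ d = 6)
    (G : Type) [Group G] [Finite G] (Z : Subgroup G) [Z.Normal]
    (hperf : commutator G = ⊤) (hZc : Z ≤ Subgroup.center G)
    (hZcard : Nat.card Z = d)
    (hquot : Nonempty ((G ⧸ Z) ≃* alternatingGroup (Fin n)))
    (P : Sylow 3 G) :
    Nat.card ↥(P : Subgroup G) = 27 ∧
    (∃ x y : ↥(P : Subgroup G), x * y ≠ y * x) ∧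
    (∀ x : ↥(P : Subgroup G), x ^ 3 = 1) := by
  have : Fact (Nat.Prime 3) := ⟨Nat.prime_three⟩
  obtain ⟨e⟩ := hquot
  have hG : Nat.card G = Nat.card (alternatingGroup (Fin n)) * d := by
    rw [card_eq_card_quotient_mul_card_subgroup Z, hZcard, Nat.card_congr e.toEquiv]
  obtain ⟨m, hm, hGm⟩ := card_alternatingGroup_fin_mul_eq_three_pow_mul hn hd
  have hP : Nat.card P = 3 ^ 3 := P.card_eq_pow_of_card_eq_pow_mul (hG.trans hGm) hm
  have h3Z : 3 ∣ Nat.card Z := hZcard ▸ by omega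
  refine ⟨hP, P.exists_mul_ne_mul_of_dvd_card_center hperf (h3Z.trans (card_dvd_of_le hZc)),
    fun x => Subtype.ext ?_⟩
  have hx : (x : G) ^ 3 ^ 3 = 1 := by
    rw [← hP]; exact congrArg Subtype.val (pow_card_eq_one' (x := x))
  have hy : e (x : G ⧸ Z) ^ 3 ^ 3 = 1 := by
    rw [← map_pow, ← QuotientGroup.mk_pow, hx, QuotientGroup.mk_one, map_one]
  have hy3 := alternatingGroup.pow_prime_eq_one_of_pow_prime_pow_eq_one
    (by rw [Fintype.card_fin]; omega) hy
  have hreal := e.symm.toMonoidHom.map_isConj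
    (alternatingGroup.isConj_inv_of_pow_three_eq_one (by rw [Fintype.card_fin]; omega) hy3)
  simp only [MulEquiv.coe_toMonoidHom, map_inv, MulEquiv.symm_apply_apply] at hreal
  have hx2d := pow_two_mul_card_eq_one_of_isConj_inv hZc h3Z
    (e.injective (by rw [map_pow, hy3, map_one])) hreal
  have hord := Nat.dvd_gcd (orderOf_dvd_of_pow_eq_one hx2d) (orderOf_dvd_of_pow_eq_one hx)
  rw [hZcard] at hord
  exact orderOf_dvd_iff_pow_eq_one.mp (hord.trans (by rcases hd with rfl | rfl <;> norm_num))

/-- Let `n ∈ {6, 7}`, `d ∈ {3, 6}`, and let `G = d.A_n` be the `d`-fold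
cover of `A_n`, i.e. a finite perfect group with a cyclic central subgroup `Z` of order `d`
such that `G/Z ≅ A_n`. Then every Sylow 3-subgroup `P` of `G` is extraspecial of order 27
and exponent 3: `|P| = 27`, `P` is nonabelian, and every element of `P` cubes to the
identity. -/
theorem sylow_three_of_exceptional_covers_extraspecial
    (n d : ℕ) (hn : n = 6 ∨ n = 7) (hd : d = 3 ∨ d = 6)
    (G : Type) [Group G] [Finite G] (Z : Subgroup G) [Z.Normal]
    (hperf : commutator G = ⊤) (hZc : Z ≤ Subgroup.center G) (hZcyc : IsCyclic Z)
    (hZcard : Nat.card Z = d)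
    (hquot : Nonempty ((G ⧸ Z) ≃* alternatingGroup (Fin n)))
    (P : Sylow 3 G) :
    Nat.card ↥(P : Subgroup G) = 27 ∧
    (∃ x y : ↥(P : Subgroup G), x * y ≠ y * x) ∧
    (∀ x : ↥(P : Subgroup G), x ^ 3 = 1) :=
  sylow_three_of_exceptional_covers_extraspecial_general n d hn hd G Z hperf hZc hZcard hquot P
end
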